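/- Let n ≥ 2, let X₁,…,Xₙ be i.i.d. random variables uniformly distributed on (0,1], and let Y = (max_i X_i − min_i X_i)/max_i X_i. Then for every integer r ≥ 0, E[Y^r] = (n−1)/(n+r−1), and the cumulative distribution function of Y satisfies P(Y ≤ z) = 0 for z ≤ 0, P(Y ≤ z) = z^{n−1} for 0 ≤ z ≤ 1, and P(Y ≤ z) = 1 for z ≥ 1. -/

import Mathlib

/-!
For `0 ≤ z < 1` and `x ∈ (0, 1]ⁿ`, `Y ≤ z` says that every coordinate lies in `[(1 - z) M, M]`,
where `M = x i` is the maximum. Splitting `(0, 1]ⁿ` according to the first index `i` at which the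
maximum is attained and integrating out `x i = s` last, each piece has measure
`∫₀¹ (z s)ⁿ⁻¹ ds = zⁿ⁻¹ / n`, so `P(Y ≤ z) = zⁿ⁻¹`. Hence `Y` has density `(n - 1) yⁿ⁻²` on
`(0, 1]`, and its moments are `∫₀¹ (n - 1) yⁿ⁻²⁺ʳ dy = (n - 1) / (n - 1 + r)`.
-/

open MeasureTheory Set Function
open scoped ENNReal

noncomputable def relRange {ι : Type*} [Fintype ι] [Nonempty ι] (x : ι → ℝ) : ℝ :=
  (Finset.univ.sup' Finset.univ_nonempty x - Finset.univ.inf' Finset.univ_nonempty x) /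
    Finset.univ.sup' Finset.univ_nonempty x

section RelRange

variable {ι : Type*} [Fintype ι] [Nonempty ι] {x : ι → ℝ}

theorem measurable_relRange : Measurable (relRange : (ι → ℝ) → ℝ) := by
  have hsup := Continuous.finset_sup'_apply Finset.univ_nonempty
    fun i (_ : i ∈ Finset.univ) => continuous_apply (A := fun _ : ι => ℝ) i
  have hinf := Continuous.finset_inf'_apply Finset.univ_nonempty
    fun i (_ : i ∈ Finset.univ) => continuous_apply (A := fun _ : ι => ℝ) i
  exact (hsup.measurable.sub hinf.measurable).div hsup.measurable

theorem relRange_nonneg (hx : ∀ i, 0 < x i) : 0 ≤ relRange x := by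
  obtain ⟨i, -, hi⟩ := Finset.exists_mem_eq_sup' Finset.univ_nonempty x
  refine div_nonneg (sub_nonneg.2 ?_) (hi ▸ (hx i).le)
  exact (Finset.inf'_le _ (Finset.mem_univ i)).trans (Finset.le_sup' _ (Finset.mem_univ i))

theorem relRange_lt_one (hx : ∀ i, 0 < x i) : relRange x < 1 := by
  obtain ⟨i, -, hi⟩ := Finset.exists_mem_eq_sup' Finset.univ_nonempty x
  rw [relRange, div_lt_one (hi ▸ hx i), sub_lt_self_iff, Finset.lt_inf'_iff]
  exact fun j _ => hx j

theorem relRange_le_iff_of_forall_le (hx : ∀ j, 0 < x j) {i : ι} (hi : ∀ j, x j ≤ x i)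
    (z : ℝ) : relRange x ≤ z ↔ ∀ j, (1 - z) * x i ≤ x j := by
  have hsup : Finset.univ.sup' Finset.univ_nonempty x = x i :=
    le_antisymm (Finset.sup'_le _ _ fun j _ => hi j) (Finset.le_sup' _ (Finset.mem_univ i))
  have hinf := Finset.le_inf'_iff Finset.univ_nonempty x (a := (1 - z) * x i)
  simp only [Finset.mem_univ, true_implies] at hinf
  rw [relRange, hsup, div_le_iff₀ (hx i), ← hinf]
  constructor <;> intro h <;> linarith

end RelRange

section Cells

variable {ι : Type*} [LinearOrder ι]

/-- Ties with the maximum `s = x i` are allowed only for `j > i`, so that `i` is the first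
maximizing index and the cells are disjoint. -/
def band (i j : ι) (z s : ℝ) : Set ℝ :=
  if j < i then Ico ((1 - z) * s) s else Icc ((1 - z) * s) s

def cell (i : ι) (z : ℝ) : Set (ι → ℝ) := {x | ∀ j ≠ i, x j ∈ band i j z (x i)}

theorem band_subset_Icc (i j : ι) (z s : ℝ) : band i j z s ⊆ Icc ((1 - z) * s) s := by
  unfold band
  split_ifs
  exacts [Ico_subset_Icc_self, subset_rfl]

theorem measurableSet_band (i j : ι) (z : ℝ) :
    MeasurableSet {p : ℝ × ℝ | p.2 ∈ band i j z p.1} := by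
  unfold band
  split_ifs
  · exact (measurableSet_le (measurable_fst.const_mul _) measurable_snd).inter
      (measurableSet_lt measurable_snd measurable_fst)
  · exact (measurableSet_le (measurable_fst.const_mul _) measurable_snd).inter
      (measurableSet_le measurable_snd measurable_fst)

theorem measurableSet_cell [Countable ι] (i : ι) (z : ℝ) : MeasurableSet (cell i z) := by
  simp only [cell, ofPred_forall]
  refine .iInter fun j => .iInter fun _ => ?_
  exact measurableSet_band i j z |>.preimage (f := fun x : ι → ℝ => (x i, x j)) (by fun_prop)

theorem pairwise_disjoint_cell (z : ℝ) : Pairwise (Disjoint on fun i : ι => cell i z) := by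
  suffices ∀ i k, i < k → Disjoint (cell i z) (cell k z) from fun i k hik =>
    hik.lt_or_gt.elim (this i k) fun h => (this k i h).symm
  intro i k hik
  refine Set.disjoint_left.2 fun x hxi hxk => ?_
  have hki : x k ≤ x i := (band_subset_Icc i k z _ (hxi k hik.ne')).2
  have hik' : x i < x k := by
    have := hxk i hik.ne
    simp only [band, if_pos hik] at this
    exact this.2
  exact hki.not_gt hik'

theorem relRange_le_iff_exists_mem_cell [Fintype ι] [Nonempty ι] {x : ι → ℝ}
    (hx : ∀ j, 0 < x j) {z : ℝ} (hz : 0 ≤ z) : relRange x ≤ z ↔ ∃ i, x ∈ cell i z := by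
  constructor
  · intro h
    obtain ⟨i₀, -, hi₀⟩ := Finset.exists_max_image Finset.univ x Finset.univ_nonempty
    obtain ⟨i, hi, hfirst⟩ := (Finset.univ.filter fun j => x j = x i₀).exists_min_image id
      ⟨i₀, by simp⟩
    simp only [Finset.mem_filter, Finset.mem_univ, true_and, id] at hi hfirst
    have hmax : ∀ j, x j ≤ x i := fun j => hi ▸ hi₀ j (Finset.mem_univ j)
    have hlow := (relRange_le_iff_of_forall_le hx hmax z).1 h
    refine ⟨i, fun j hj => ?_⟩
    unfold band
    split_ifs with hji
    · exact ⟨hlow j, (hmax j).lt_of_ne fun heq => hji.not_ge (hfirst j (heq.trans hi))⟩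
    · exact ⟨hlow j, hmax j⟩
  · rintro ⟨i, hi⟩
    have hmax : ∀ j, x j ≤ x i := fun j =>
      if hj : j = i then hj ▸ le_rfl else (band_subset_Icc i j z _ (hi j hj)).2
    refine (relRange_le_iff_of_forall_le hx hmax z).2 fun j => ?_
    if hj : j = i then
      subst hj; nlinarith [hx j]
    else exact (band_subset_Icc i j z _ (hi j hj)).1

end Cells

theorem MeasureTheory.Measure.pi_setOf_forall_ne_mem {α : Type*} [MeasurableSpace α] {m : ℕ}
    (μ : Fin (m + 1) → Measure α) [∀ i, SigmaFinite (μ i)] (i : Fin (m + 1))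
    {B : Fin (m + 1) → α → Set α} (hB : ∀ j, MeasurableSet {p : α × α | p.2 ∈ B j p.1}) :
    Measure.pi μ {x | ∀ j ≠ i, x j ∈ B j (x i)} =
      ∫⁻ s, ∏ j : Fin m, μ (i.succAbove j) (B (i.succAbove j) s) ∂μ i := by
  set D : Set (α × (Fin m → α)) := {p | ∀ j, p.2 j ∈ B (i.succAbove j) p.1}
  have hD : MeasurableSet D := by
    simp only [D, ofPred_forall]
    exact .iInter fun j => (hB _).preimage (f := fun p : α × (Fin m → α) => (p.1, p.2 j))
      (by fun_prop)
  have hpre : {x | ∀ j ≠ i, x j ∈ B j (x i)} =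
      MeasurableEquiv.piFinSuccAbove (fun _ => α) i ⁻¹' D := by
    ext x
    simp [D, MeasurableEquiv.piFinSuccAbove_apply, Fin.forall_iff_succAbove i, Fin.succAbove_ne,
      Fin.removeNth]
  rw [hpre, (measurePreserving_piFinSuccAbove μ i).measure_preimage hD.nullMeasurableSet,
    Measure.prod_apply hD]
  congr 1 with s
  rw [show Prod.mk s ⁻¹' D = univ.pi fun j => B (i.succAbove j) s by ext; simp [D],
    Measure.pi_pi]

instance : IsProbabilityMeasure (volume.restrict (Ioc (0 : ℝ) 1)) := ⟨by simp⟩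

theorem lintegral_Ioc_ofReal_mul_pow (k : ℕ) (b : ℝ) :
    ∫⁻ s in Ioc 0 b, ENNReal.ofReal ((k + 1) * s ^ k) = ENNReal.ofReal (max 0 b ^ (k + 1)) := by
  rcases le_total b 0 with hb | hb
  · simp [Ioc_eq_empty_of_le hb, max_eq_left hb]
  rw [max_eq_right hb, ← ofReal_integral_eq_lintegral_ofReal
      (Continuous.integrableOn_Ioc (by fun_prop : Continuous fun s : ℝ => (k + 1) * s ^ k))
      (ae_restrict_of_forall_mem measurableSet_Ioc fun s hs => by positivity [hs.1.le]),
    ← intervalIntegral.integral_of_le hb, intervalIntegral.integral_const_mul, integral_pow]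
  field_simp
  simp

section Uniform

variable {ι : Type*} [Fintype ι]

theorem ae_forall_mem_Ioc : ∀ᵐ x ∂Measure.pi fun _ : ι => volume.restrict (Ioc (0 : ℝ) 1),
    ∀ i, x i ∈ Ioc 0 1 :=
  ae_all_iff.2 fun _ => Measure.tendsto_eval_ae_ae.eventually (ae_restrict_mem measurableSet_Ioc)

theorem measure_setOf_eq_of_forall_mem_Ioc {p : (ι → ℝ) → Prop} {T : Set (ι → ℝ)}
    (h : ∀ x, (∀ i, x i ∈ Ioc 0 1) → (p x ↔ x ∈ T)) :
    (Measure.pi fun _ : ι => volume.restrict (Ioc (0 : ℝ) 1)) {x | p x} =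
      (Measure.pi fun _ : ι => volume.restrict (Ioc (0 : ℝ) 1)) T :=
  measure_congr <| Filter.eventuallyEq_set.2 <| ae_forall_mem_Ioc.mono h

end Uniform

theorem volume_restrict_Ioc_band {ι : Type*} [LinearOrder ι] (i j : ι) {z s : ℝ} (hz : z < 1)
    (hs : s ∈ Ioc (0 : ℝ) 1) :
    volume.restrict (Ioc (0 : ℝ) 1) (band i j z s) = ENNReal.ofReal (z * s) := by
  have hsub : band i j z s ⊆ Ioc 0 1 := fun y hy =>
    have hy := band_subset_Icc i j z s hy
    ⟨(mul_pos (sub_pos.2 hz) hs.1).trans_le hy.1, hy.2.trans hs.2⟩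
  rw [Measure.restrict_apply' measurableSet_Ioc, inter_eq_left.2 hsub]
  unfold band
  split_ifs <;> simp only [Real.volume_Ico, Real.volume_Icc] <;> ring_nf

theorem measure_cell {m : ℕ} (i : Fin (m + 1)) {z : ℝ} (hz₀ : 0 ≤ z) (hz₁ : z < 1) :
    (Measure.pi fun _ : Fin (m + 1) => volume.restrict (Ioc (0 : ℝ) 1)) (cell i z) =
      ∫⁻ s in Ioc 0 1, ENNReal.ofReal ((z * s) ^ m) := by
  rw [cell, Measure.pi_setOf_forall_ne_mem _ i fun j => measurableSet_band i j z]
  refine setLIntegral_congr_fun measurableSet_Ioc fun s hs => ?_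
  simp only [volume_restrict_Ioc_band _ _ hz₁ hs, Finset.prod_const, Finset.card_univ,
    Fintype.card_fin, ENNReal.ofReal_pow (mul_nonneg hz₀ hs.1.le)]

theorem measure_relRange_le_of_mem_Ico {m : ℕ} {z : ℝ} (hz₀ : 0 ≤ z) (hz₁ : z < 1) :
    (Measure.pi fun _ : Fin (m + 1) => volume.restrict (Ioc (0 : ℝ) 1)) {x | relRange x ≤ z} =
      ENNReal.ofReal (z ^ m) := by
  calc
    _ = (Measure.pi fun _ : Fin (m + 1) => volume.restrict (Ioc (0 : ℝ) 1)) (⋃ i, cell i z) :=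
      measure_setOf_eq_of_forall_mem_Ioc fun x hx => by
        rw [mem_iUnion]; exact relRange_le_iff_exists_mem_cell (fun i => (hx i).1) hz₀
    _ = (m + 1) * ∫⁻ s in Ioc 0 1, ENNReal.ofReal ((z * s) ^ m) := by
      rw [measure_iUnion (pairwise_disjoint_cell z) (measurableSet_cell · z), tsum_fintype]
      simp [measure_cell _ hz₀ hz₁]
    _ = ∫⁻ s in Ioc 0 1, ENNReal.ofReal (z ^ m) * ENNReal.ofReal ((m + 1) * s ^ m) := by
      rw [← lintegral_const_mul' _ _ (by finiteness)]
      refine setLIntegral_congr_fun measurableSet_Ioc fun s hs => ?_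
      rw [← ENNReal.ofReal_mul (by positivity), mul_pow,
        show (m + 1 : ℝ≥0∞) = ENNReal.ofReal (m + 1) by norm_cast,
        ← ENNReal.ofReal_mul (by positivity)]
      ring_nf
    _ = ENNReal.ofReal (z ^ m) := by
      rw [lintegral_const_mul _ (by fun_prop), lintegral_Ioc_ofReal_mul_pow]
      simp

theorem measure_relRange_le (k : ℕ) (z : ℝ) :
    (Measure.pi fun _ : Fin (k + 2) => volume.restrict (Ioc (0 : ℝ) 1)) {x | relRange x ≤ z} =
      ENNReal.ofReal (max 0 (min 1 z) ^ (k + 1)) := by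
  rcases lt_or_ge z 0 with hz₀ | hz₀
  · rw [measure_setOf_eq_of_forall_mem_Ioc (T := ∅) fun x hx =>
      iff_of_false (fun h => hz₀.not_ge ((relRange_nonneg fun i => (hx i).1).trans h))
        (notMem_empty x)]
    simp [max_eq_left (min_le_of_right_le hz₀.le)]
  rcases lt_or_ge z 1 with hz₁ | hz₁
  · rw [measure_relRange_le_of_mem_Ico hz₀ hz₁, min_eq_right hz₁.le, max_eq_right hz₀]
  · rw [measure_setOf_eq_of_forall_mem_Ioc (T := univ) fun x hx =>
      iff_of_true ((relRange_lt_one fun i => (hx i).1).le.trans hz₁) (mem_univ x)]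
    rw [min_eq_left hz₁, max_eq_right zero_le_one, one_pow, ENNReal.ofReal_one, measure_univ]

/-- The `Beta(k + 1, 1)` distribution. -/
noncomputable def powerLaw (k : ℕ) : Measure ℝ :=
  (volume.restrict (Ioc (0 : ℝ) 1)).withDensity fun s => ENNReal.ofReal ((k + 1) * s ^ k)

theorem powerLaw_Iic (k : ℕ) (z : ℝ) :
    powerLaw k (Iic z) = ENNReal.ofReal (max 0 (min 1 z) ^ (k + 1)) := by
  rw [powerLaw, withDensity_apply _ measurableSet_Iic,
    Measure.restrict_restrict measurableSet_Iic, inter_comm, Ioc_inter_Iic,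
    lintegral_Ioc_ofReal_mul_pow]

theorem integral_pow_powerLaw (k r : ℕ) :
    ∫ y, y ^ r ∂powerLaw k = (k + 1) / (k + 1 + r) := by
  rw [powerLaw, integral_withDensity_eq_integral_toReal_smul (by fun_prop)
    (ae_of_all _ fun _ => ENNReal.ofReal_lt_top)]
  calc
    _ = ∫ y in Ioc (0 : ℝ) 1, ((k : ℝ) + 1) * y ^ (k + r) :=
      setIntegral_congr_fun measurableSet_Ioc fun y hy => by
        rw [ENNReal.toReal_ofReal (by positivity [hy.1.le]), smul_eq_mul, mul_assoc, pow_add]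
    _ = (k + 1) / (k + 1 + r) := by
      rw [integral_const_mul, ← intervalIntegral.integral_of_le zero_le_one, integral_pow]
      push_cast
      field_simp
      ring

theorem map_relRange (k : ℕ) :
    (Measure.pi fun _ : Fin (k + 2) => volume.restrict (Ioc (0 : ℝ) 1)).map relRange =
      powerLaw k := by
  have := Measure.isProbabilityMeasure_map
    (μ := Measure.pi fun _ : Fin (k + 2) => volume.restrict (Ioc (0 : ℝ) 1))
    measurable_relRange.aemeasurable
  refine Measure.ext_of_Iic _ _ fun z => ?_
  rw [Measure.map_apply measurable_relRange measurableSet_Iic, powerLaw_Iic]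
  exact measure_relRange_le k z

theorem integral_relRange_pow (k r : ℕ) :
    ∫ x, relRange x ^ r ∂Measure.pi (fun _ : Fin (k + 2) => volume.restrict (Ioc (0 : ℝ) 1)) =
      (k + 1) / (k + 1 + r) := by
  rw [← integral_pow_powerLaw, ← map_relRange,
    integral_map measurable_relRange.aemeasurable (continuous_pow r).aestronglyMeasurable]

/-- For `X₁,…,Xₙ` (`n ≥ 2`) i.i.d. uniform on `(0,1]` and
`Y = (max_i X_i − min_i X_i)/max_i X_i`: for every integer `r ≥ 0`,
`E[Yʳ] = (n−1)/(n+r−1)`, and the c.d.f. of `Y` is `0` for `z ≤ 0`, `z^{n−1}` for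
`0 ≤ z ≤ 1`, and `1` for `z ≥ 1`. -/
theorem moments_and_cdf_relative_range (n : ℕ) (hn : 2 ≤ n) :
    (∀ r : ℕ,
        (∫ x : Fin n → ℝ,
            ((Finset.univ.sup' ⟨⟨0, by omega⟩, Finset.mem_univ _⟩ x -
                  Finset.univ.inf' ⟨⟨0, by omega⟩, Finset.mem_univ _⟩ x) /
                Finset.univ.sup' ⟨⟨0, by omega⟩, Finset.mem_univ _⟩ x) ^ r
            ∂(Measure.pi fun _ : Fin n => volume.restrict (Set.Ioc (0 : ℝ) 1)))
          = ((n : ℝ) - 1) / ((n : ℝ) + (r : ℝ) - 1)) ∧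
      (∀ z : ℝ, z ≤ 0 →
        ((Measure.pi fun _ : Fin n => volume.restrict (Set.Ioc (0 : ℝ) 1))
            {x : Fin n → ℝ |
              (Finset.univ.sup' ⟨⟨0, by omega⟩, Finset.mem_univ _⟩ x -
                  Finset.univ.inf' ⟨⟨0, by omega⟩, Finset.mem_univ _⟩ x) /
                Finset.univ.sup' ⟨⟨0, by omega⟩, Finset.mem_univ _⟩ x ≤ z}).toReal = 0) ∧
      (∀ z : ℝ, 0 ≤ z → z ≤ 1 →
        ((Measure.pi fun _ : Fin n => volume.restrict (Set.Ioc (0 : ℝ) 1))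
            {x : Fin n → ℝ |
              (Finset.univ.sup' ⟨⟨0, by omega⟩, Finset.mem_univ _⟩ x -
                  Finset.univ.inf' ⟨⟨0, by omega⟩, Finset.mem_univ _⟩ x) /
                Finset.univ.sup' ⟨⟨0, by omega⟩, Finset.mem_univ _⟩ x ≤ z}).toReal
          = z ^ (n - 1)) ∧
      (∀ z : ℝ, 1 ≤ z →
        ((Measure.pi fun _ : Fin n => volume.restrict (Set.Ioc (0 : ℝ) 1))
            {x : Fin n → ℝ |
              (Finset.univ.sup' ⟨⟨0, by omega⟩, Finset.mem_univ _⟩ x -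
                  Finset.univ.inf' ⟨⟨0, by omega⟩, Finset.mem_univ _⟩ x) /
                Finset.univ.sup' ⟨⟨0, by omega⟩, Finset.mem_univ _⟩ x ≤ z}).toReal = 1) := by
  obtain ⟨k, rfl⟩ : ∃ k, n = k + 2 := ⟨n - 2, by omega⟩
  simp only [← relRange.eq_def, measure_relRange_le, integral_relRange_pow]
  refine ⟨fun r => ?_, fun z hz => ?_, fun z hz₀ hz₁ => ?_, fun z hz => ?_⟩
  · push_cast; ring
  · simp [max_eq_left (min_le_of_right_le hz)]
  · rw [min_eq_right hz₁, max_eq_right hz₀, ENNReal.toReal_ofReal (by positivity)]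
    rfl
  · simp [min_eq_left hz]
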